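/- Conversely, if z* is the optimal solution of the Leader-Opt problem with |A_{z*}| > K, then z* satisfies the Slope Order condition (g'_j(z*_j) ≤ θ_{z*} for j ∈ A_{z*} and g'_ℓ(z*_ℓ) ≥ θ_{z*} for ℓ ∈ C_{z*}), the Structure Slope condition (g'_k(z*_k) = θ_{z*} for k ∈ B_{z*}), and the Sum condition (∑_i g_i(z*_i) = G). -/

import Mathlib

open Finset Filter Topology

/-- Sum of the `J - K` smallest coordinates of `z`: the infimum of sums over
`(J-K)`-element subsets of coordinates. -/
noncomputable def sumSmallest (J K : ℕ) (z : Fin J → ℝ) : ℝ :=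
  sInf {s : ℝ | ∃ S : Finset (Fin J), S.card = J - K ∧ s = ∑ i ∈ S, z i}

/-- Feasible stuffing vectors: nonnegative, total cost at most `G`. -/
def Feasible (J : ℕ) (g : Fin J → ℝ → ℝ) (G : ℝ) : Set (Fin J → ℝ) :=
  {z | (∀ j, 0 ≤ z j) ∧ ∑ j, g j (z j) ≤ G}

/-!
Since `sumSmallest J K w ≥ ∑ w - K * max w` for every `w`, with equality at `z` because at least
`K` coordinates of `z` attain the maximum `m`, the optimum `z` also maximizes `∑ w - K * max w` over
the feasible set. Moving along a direction `c` changes this objective at rate at least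
`∑ c - K * max_{z_j = m} c_j` and the cost at rate `∑ g'_j(z_j) c_j`, so every direction that keeps
`z` nonnegative and strictly decreases the cost satisfies `∑ c ≤ K * max_{z_j = m} c_j`. Spending
unused budget uniformly gives the sum condition; trading the top level `A` against a single
coordinate `k` in either direction gives `(|A| - K) g'_k(z_k) ≥ ∑_A g'` when `z_k < m` and
`≤` when `z_k > 0`.
-/

section SumSmallest

variable {J K : ℕ} {w : Fin J → ℝ}

theorem sumSmallest_le_sum (S : Finset (Fin J)) (hS : #S = J - K) :
    sumSmallest J K w ≤ ∑ i ∈ S, w i := by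
  refine csInf_le ?_ ⟨S, hS, rfl⟩
  refine ((Set.finite_range fun S : Finset (Fin J) => ∑ i ∈ S, w i).subset ?_).bddBelow
  rintro _ ⟨S, -, rfl⟩
  exact ⟨S, rfl⟩

theorem sum_sub_mul_le_sumSmallest (hK : K ≤ J) {M : ℝ} (hM : ∀ j, w j ≤ M) :
    ∑ j, w j - K * M ≤ sumSmallest J K w := by
  obtain ⟨S₀, -, hS₀⟩ := exists_subset_card_eq (show J - K ≤ #(univ : Finset (Fin J)) by simp)
  refine le_csInf ⟨_, S₀, hS₀, rfl⟩ ?_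
  rintro _ ⟨S, hS, rfl⟩
  have hcompl : (#Sᶜ : ℝ) = K := by
    rw [card_compl, Fintype.card_fin, hS, Nat.sub_sub_self hK]
  have hle := sum_le_card_nsmul Sᶜ w M fun j _ => hM j
  rw [nsmul_eq_mul, hcompl] at hle
  linarith [sum_add_sum_compl S w]

theorem sumSmallest_le_sum_sub_mul {A : Finset (Fin J)} {M : ℝ} (hA : ∀ i ∈ A, w i = M)
    (hAK : K ≤ #A) : sumSmallest J K w ≤ ∑ j, w j - K * M := by
  obtain ⟨T, hTA, hT⟩ := exists_subset_card_eq hAK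
  have hTsum : ∑ i ∈ T, w i = K * M := by
    rw [sum_congr rfl fun i hi => hA i (hTA hi), sum_const, hT, nsmul_eq_mul]
  have := sumSmallest_le_sum (K := K) (w := w) Tᶜ (by rw [card_compl, Fintype.card_fin, hT])
  linarith [sum_add_sum_compl T w]

end SumSmallest

theorem eventually_add_mul_le_add_mul {a b x y : ℝ} (hab : a ≤ b) (h : a = b → x ≤ y) :
    ∀ᶠ s in 𝓝[>] 0, a + s * x ≤ b + s * y := by
  rcases hab.eq_or_lt with rfl | hlt
  · filter_upwards [self_mem_nhdsWithin] with s (hs : 0 < s)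
    gcongr
    exact h rfl
  · have hlim : Tendsto (fun s : ℝ => a + s * x - (b + s * y)) (𝓝 0) (𝓝 (a - b)) :=
      (show Continuous fun s : ℝ => a + s * x - (b + s * y) by fun_prop).tendsto' 0 _ (by simp)
    filter_upwards [(hlim.eventually_lt_const (sub_neg.2 hlt)).filter_mono nhdsWithin_le_nhds]
      with s hs
    linarith

theorem HasDerivAt.eventually_right_lt_of_neg {f : ℝ → ℝ} {f' x : ℝ} (hf : HasDerivAt f f' x)
    (hf' : f' < 0) : ∀ᶠ y in 𝓝[>] x, f y < f x := by
  filter_upwards [hf.hasDerivWithinAt.limsup_slope_le' (lt_irrefl x) hf', self_mem_nhdsWithin]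
    with y hslope (hy : x < y)
  rw [slope_def_field, div_lt_iff₀ (sub_pos.2 hy), zero_mul] at hslope
  linarith

theorem deriv_nonneg_of_monotoneOn_Ici {f : ℝ → ℝ} {a x : ℝ} (hf : MonotoneOn f (Set.Ici a))
    (hfx : DifferentiableAt ℝ f x) (hx : a ≤ x) : 0 ≤ deriv f x := by
  rw [← hfx.derivWithin (uniqueDiffOn_Ici a x hx)]
  exact hf.derivWithin_nonneg

section Perturbation

variable {J K : ℕ} {g : Fin J → ℝ → ℝ} {G : ℝ} {z c : Fin J → ℝ}

theorem eventually_sum_comp_add_lt (hdiff : ∀ j, Differentiable ℝ (g j))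
    (hc : ∑ j, deriv (g j) (z j) * c j < 0) :
    ∀ᶠ s in 𝓝[>] 0, ∑ j, g j (z j + s * c j) < ∑ j, g j (z j) := by
  have hder : HasDerivAt (fun s => ∑ j, g j (z j + s * c j)) (∑ j, deriv (g j) (z j) * c j) 0 := by
    refine HasDerivAt.fun_sum fun j _ => ?_
    have hline : HasDerivAt (fun s : ℝ => z j + s * c j) (c j) 0 := by
      simpa using ((hasDerivAt_id (0 : ℝ)).mul_const (c j)).const_add (z j)
    have hg : HasDerivAt (g j) (deriv (g j) (z j)) (z j + 0 * c j) := by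
      simpa using (hdiff j (z j)).hasDerivAt
    exact hg.comp 0 hline
  simpa using hder.eventually_right_lt_of_neg hc

theorem eventually_sum_comp_add_lt_of_lt (hdiff : ∀ j, Differentiable ℝ (g j))
    (hG : ∑ j, g j (z j) < G) : ∀ᶠ s in 𝓝[>] 0, ∑ j, g j (z j + s * c j) < G := by
  have hcont : Continuous fun s : ℝ => ∑ j, g j (z j + s * c j) :=
    continuous_finsetSum _ fun j _ => (hdiff j).continuous.comp (by fun_prop)
  exact ((hcont.tendsto' 0 _ (by simp)).eventually_lt_const hG).filter_mono nhdsWithin_le_nhds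

theorem sum_le_mul_of_isMaxOn {m M : ℝ} (hK : K ≤ J)
    (hmax : IsMaxOn (sumSmallest J K) (Feasible J g G) z) (hm : ∀ j, z j ≤ m)
    (hzF : sumSmallest J K z ≤ ∑ j, z j - K * m) (hz : ∀ j, 0 ≤ z j)
    (hc0 : ∀ j, z j = 0 → 0 ≤ c j) (hcm : ∀ j, z j = m → c j ≤ M)
    (hcost : ∀ᶠ s in 𝓝[>] 0, ∑ j, g j (z j + s * c j) ≤ G) :
    ∑ j, c j ≤ K * M := by
  have hnonneg : ∀ᶠ s in 𝓝[>] (0 : ℝ), ∀ j, 0 ≤ z j + s * c j :=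
    eventually_all.2 fun j => by
      simpa using eventually_add_mul_le_add_mul (x := 0) (hz j) fun h => hc0 j h.symm
  have hbound : ∀ᶠ s in 𝓝[>] (0 : ℝ), ∀ j, z j + s * c j ≤ m + s * M :=
    eventually_all.2 fun j => eventually_add_mul_le_add_mul (hm j) (hcm j)
  obtain ⟨s, ⟨⟨hs0, hsm⟩, hsG⟩, hs : 0 < s⟩ :=
    (((hnonneg.and hbound).and hcost).and self_mem_nhdsWithin).exists
  have hlow := sum_sub_mul_le_sumSmallest hK hsm
  have hup := isMaxOn_iff.1 hmax _ ⟨hs0, hsG⟩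
  rw [sum_add_distrib, ← mul_sum] at hlow
  refine le_of_mul_le_mul_left ?_ hs
  linarith

theorem sum_comp_eq_of_isMaxOn {m : ℝ} (hK : K < J)
    (hmax : IsMaxOn (sumSmallest J K) (Feasible J g G) z) (hm : ∀ j, z j ≤ m)
    (hzF : sumSmallest J K z ≤ ∑ j, z j - K * m) (hfeas : z ∈ Feasible J g G)
    (hdiff : ∀ j, Differentiable ℝ (g j)) :
    ∑ j, g j (z j) = G := by
  refine hfeas.2.eq_of_not_lt fun hlt => hK.not_ge ?_
  have := sum_le_mul_of_isMaxOn (c := fun _ => 1) (M := 1) hK.le hmax hm hzF hfeas.1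
    (fun _ _ => zero_le_one) (fun _ _ => le_rfl)
    ((eventually_sum_comp_add_lt_of_lt hdiff hlt).mono fun _ h => h.le)
  simpa using this

theorem sum_deriv_le_mul_deriv_of_lt {m : ℝ} {A : Finset (Fin J)} (hK : K ≤ J)
    (hmax : IsMaxOn (sumSmallest J K) (Feasible J g G) z) (hm : ∀ j, z j ≤ m)
    (hzF : sumSmallest J K z ≤ ∑ j, z j - K * m) (hfeas : z ∈ Feasible J g G)
    (hdiff : ∀ j, Differentiable ℝ (g j)) (hd : ∀ j, 0 ≤ deriv (g j) (z j)) (hm0 : 0 < m)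
    (hA : ∀ i, i ∈ A ↔ z i = m) (hAK : K < #A) {k : Fin J} (hk : z k < m) :
    ∑ j ∈ A, deriv (g j) (z j) ≤ (#A - K) * deriv (g k) (z k) := by
  set d := fun j => deriv (g j) (z j)
  by_contra! hlt
  have hAK' : (0 : ℝ) < #A - K := sub_pos.2 (by exact_mod_cast hAK)
  have hsum : 0 < ∑ j ∈ A, d j := (mul_nonneg hAK'.le (hd k)).trans_lt hlt
  obtain ⟨u, hdu, hu⟩ : ∃ u, d k / ∑ j ∈ A, d j < u ∧ u < 1 / (#A - K) :=
    exists_between (by rwa [div_lt_div_iff₀ hsum hAK', one_mul, mul_comm])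
  set c : Fin J → ℝ := fun j => (if j = k then 1 else 0) - if j ∈ A then u else 0
  have hdc : ∑ j, d j * c j < 0 := by
    have : ∑ j, d j * c j = d k - u * ∑ j ∈ A, d j := by
      simp [c, mul_sub, sum_sub_distrib, mul_sum, mul_comm]
    rw [this, sub_neg]
    exact (div_lt_iff₀ hsum).1 hdu
  have := sum_le_mul_of_isMaxOn (c := c) (M := -u) hK hmax hm hzF hfeas.1 ?_ ?_
    ((eventually_sum_comp_add_lt hdiff hdc).mono fun _ h => h.le.trans hfeas.2)
  · have hcsum : ∑ j, c j = 1 - #A * u := by simp [c, sum_sub_distrib]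
    have := (lt_div_iff₀ hAK').1 hu
    linarith
  · intro j hj
    have hjA : j ∉ A := fun h => hm0.ne' (((hA j).1 h).symm.trans hj)
    simp only [c, hjA, if_false, sub_zero]
    positivity
  · intro j hj
    have hjk : j ≠ k := fun h => hk.ne (h ▸ hj)
    simp [c, (hA j).2 hj, hjk]

theorem mul_deriv_le_sum_deriv_of_pos {m : ℝ} {S : Finset (Fin J)} (hK : K ≤ J)
    (hmax : IsMaxOn (sumSmallest J K) (Feasible J g G) z) (hm : ∀ j, z j ≤ m)
    (hzF : sumSmallest J K z ≤ ∑ j, z j - K * m) (hfeas : z ∈ Feasible J g G)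
    (hdiff : ∀ j, Differentiable ℝ (g j)) (hd : ∀ j, 0 ≤ deriv (g j) (z j))
    {k : Fin J} (hk : 0 < z k) :
    (#S - K) * deriv (g k) (z k) ≤ ∑ j ∈ S, deriv (g j) (z j) := by
  set d := fun j => deriv (g j) (z j)
  by_contra! hlt
  have hSd : 0 ≤ ∑ j ∈ S, d j := sum_nonneg fun j _ => hd j
  have hdk : 0 < d k := (hd k).lt_of_ne fun h => by simp [d, ← h] at hlt; linarith
  obtain ⟨t, hSt, ht⟩ : ∃ t, (∑ j ∈ S, d j) / d k < t ∧ t < #S - K :=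
    exists_between (by rwa [div_lt_iff₀ hdk])
  have ht0 : 0 < t := (div_nonneg hSd hdk.le).trans_lt hSt
  set c : Fin J → ℝ := fun j => (if j ∈ S then 1 else 0) - if j = k then t else 0
  have hdc : ∑ j, d j * c j < 0 := by
    have : ∑ j, d j * c j = ∑ j ∈ S, d j - t * d k := by
      simp [c, mul_sub, sum_sub_distrib, mul_comm]
    rw [this, sub_neg]
    exact (div_lt_iff₀ hdk).1 hSt
  have := sum_le_mul_of_isMaxOn (c := c) (M := 1) hK hmax hm hzF hfeas.1 ?_ ?_
    ((eventually_sum_comp_add_lt hdiff hdc).mono fun _ h => h.le.trans hfeas.2)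
  · have hcsum : ∑ j, c j = #S - t := by simp [c, sum_sub_distrib]
    linarith
  · intro j hj
    have hjk : j ≠ k := fun h => hk.ne' (h ▸ hj)
    simp only [c, hjk, if_false, sub_zero]
    positivity
  · intro j _
    simp only [c]
    split_ifs <;> linarith

end Perturbation

theorem stmt7_general (J K : ℕ) (g : Fin J → ℝ → ℝ) (G : ℝ)
    (hK : K < J) (hG : 0 < G)
    (hdiff : ∀ j, Differentiable ℝ (g j))
    (hmono : ∀ j, StrictMonoOn (g j) (Set.Ici (0 : ℝ)))
    (hzero : ∀ j, g j 0 = 0)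
    (z : Fin J → ℝ)
    (A B C : Finset (Fin J)) (θ : ℝ)
    (hA : A = Finset.univ.filter fun i => ∀ j, z j ≤ z i)
    (hB : B = Finset.univ.filter fun i => 0 < z i ∧ ∃ j, z i < z j)
    (hC : C = Finset.univ.filter fun i => z i = 0)
    (hAK : K < A.card)
    (hθ : θ = (∑ j ∈ A, deriv (g j) (z j)) / ((A.card : ℝ) - K))
    (hfeas : z ∈ Feasible J g G)
    (hmax : ∀ w ∈ Feasible J g G, sumSmallest J K w ≤ sumSmallest J K z) :
    (∀ j ∈ A, deriv (g j) (z j) ≤ θ) ∧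
    (∀ j ∈ C, θ ≤ deriv (g j) (z j)) ∧
    (∀ j ∈ B, deriv (g j) (z j) = θ) ∧
    ∑ j, g j (z j) = G := by
  have : Nonempty (Fin J) := ⟨⟨0, by omega⟩⟩
  obtain ⟨i₀, hi₀⟩ := Finite.exists_max z
  have hAm : ∀ i, i ∈ A ↔ z i = z i₀ := fun i => by
    simpa [hA] using ⟨fun h => le_antisymm (hi₀ i) (h i₀), fun h j => h ▸ hi₀ j⟩
  have hzF := sumSmallest_le_sum_sub_mul (fun i hi => (hAm i).1 hi) hAK.le
  replace hmax := isMaxOn_iff.2 hmax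
  have hd : ∀ j, 0 ≤ deriv (g j) (z j) := fun j =>
    deriv_nonneg_of_monotoneOn_Ici (hmono j).monotoneOn (hdiff j (z j)) (hfeas.1 j)
  have hsum := sum_comp_eq_of_isMaxOn hK hmax hi₀ hzF hfeas hdiff
  have hm0 : 0 < z i₀ := by
    by_contra! hm0
    have hz0 : ∀ j, z j = 0 := fun j => le_antisymm ((hi₀ j).trans hm0) (hfeas.1 j)
    simp [hz0, hzero] at hsum
    linarith
  have hAK' : (0 : ℝ) < A.card - K := sub_pos.2 (by exact_mod_cast hAK)
  have lower : ∀ k, z k < z i₀ → θ ≤ deriv (g k) (z k) := fun k hk => by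
    rw [hθ, div_le_iff₀' hAK']
    exact sum_deriv_le_mul_deriv_of_lt hK.le hmax hi₀ hzF hfeas hdiff hd hm0 hAm hAK hk
  have upper : ∀ k, 0 < z k → deriv (g k) (z k) ≤ θ := fun k hk => by
    rw [hθ, le_div_iff₀' hAK']
    exact mul_deriv_le_sum_deriv_of_pos hK.le hmax hi₀ hzF hfeas hdiff hd hk
  refine ⟨fun j hj => upper j (((hAm j).1 hj).symm ▸ hm0),
    fun j hj => lower j ((mem_filter.1 (hC ▸ hj)).2 ▸ hm0), fun j hj => ?_, hsum⟩
  obtain ⟨-, hj0, l, hjl⟩ := mem_filter.1 (hB ▸ hj)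
  exact (upper j hj0).antisymm (lower j (hjl.trans_le (hi₀ l)))

/-- Necessity direction of the structure theorem: the optimal solution of
Leader-Opt with `|A| > K` satisfies the slope-order, structure-slope, and sum
conditions. -/
theorem stmt7 (J K : ℕ) (g : Fin J → ℝ → ℝ) (G : ℝ)
    (hK0 : 0 < K) (hK : K < J) (hG : 0 < G)
    (hconv : ∀ j, StrictConvexOn ℝ (Set.Ici 0) (g j))
    (hdiff : ∀ j, Differentiable ℝ (g j))
    (hmono : ∀ j, StrictMonoOn (g j) (Set.Ici (0 : ℝ)))
    (hzero : ∀ j, g j 0 = 0)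
    (z : Fin J → ℝ)
    (A B C : Finset (Fin J)) (θ : ℝ)
    (hA : A = Finset.univ.filter fun i => ∀ j, z j ≤ z i)
    (hB : B = Finset.univ.filter fun i => 0 < z i ∧ ∃ j, z i < z j)
    (hC : C = Finset.univ.filter fun i => z i = 0)
    (hAK : K < A.card)
    (hθ : θ = (∑ j ∈ A, deriv (g j) (z j)) / ((A.card : ℝ) - K))
    (hfeas : z ∈ Feasible J g G)
    (hmax : ∀ w ∈ Feasible J g G, sumSmallest J K w ≤ sumSmallest J K z) :
    (∀ j ∈ A, deriv (g j) (z j) ≤ θ) ∧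
    (∀ j ∈ C, θ ≤ deriv (g j) (z j)) ∧
    (∀ j ∈ B, deriv (g j) (z j) = θ) ∧
    ∑ j, g j (z j) = G :=
  stmt7_general J K g G hK hG hdiff hmono hzero z A B C θ hA hB hC hAK hθ hfeas hmax
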